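/- If the two filters use equal gains K_t = K̃_t for all t ≥ 1 and equal initial means m_0 = m̃_0, then for every t ≥ 1, m_t − m̃_t = ∑_{i=0}^{t−2} (∏_{j=0}^{i} A_{t−j}) C_{t−1−i} + C_t; in particular the difference m_t − m̃_t is determined by the gains and spoofing signals alone and does not involve the measurements z_t, the control inputs u_t, or the initial mean. -/

import Mathlib

/-!
With equal gains both filters apply the same affine update, so the measurement and control terms cancel
in the difference `d_t = m_t − m̃_t`, which obeys the linear recursion `d_t = A_t d_{t−1} + C_t`
driven only by the spoofing signal. Since `d_0 = 0`, unrolling this recursion gives the sum.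
-/

open Matrix

lemma List.prod_map_range_succ_sub {M : Type*} [Monoid M] (f : ℕ → M) (t k : ℕ) :
    ((List.range (k + 1)).map fun j => f (t + 1 - j)).prod
      = f (t + 1) * ((List.range k).map fun j => f (t - j)).prod := by
  simp only [List.prod_range_succ', Nat.sub_zero, Nat.succ_eq_add_one, Nat.add_sub_add_right]

section

variable {n R : Type*} [Fintype n] [DecidableEq n]

lemma Matrix.kalman_update_sub [Ring R] (F H K : Matrix n n R) (g x x' z z' : n → R) :
    ((1 - K * H) *ᵥ (F *ᵥ x + g) + K *ᵥ z) - ((1 - K * H) *ᵥ (F *ᵥ x' + g) + K *ᵥ z')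
      = (F - K * H * F) *ᵥ (x - x') + K *ᵥ (z - z') := by
  have hfactor : F - K * H * F = (1 - K * H) * F := by rw [Matrix.sub_mul, Matrix.one_mul]
  rw [hfactor, ← mulVec_mulVec]
  simp only [mulVec_add, mulVec_sub]
  abel

lemma Matrix.eq_sum_of_affine_recursion [Semiring R] (A : ℕ → Matrix n n R) (C d : ℕ → n → R)
    (h0 : d 0 = 0) (hstep : ∀ t, d (t + 1) = A (t + 1) *ᵥ d t + C (t + 1)) (t : ℕ) :
    d (t + 1) = ∑ i ∈ Finset.range t,
        ((List.range (i + 1)).map fun j => A (t + 1 - j)).prod *ᵥ C (t - i) + C (t + 1) := by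
  induction t with
  | zero => simp [hstep, h0]
  | succ t ih =>
    rw [hstep, ih, Finset.sum_range_succ', mulVec_add, mulVec_sum]
    simp only [List.prod_map_range_succ_sub, ← mulVec_mulVec, Nat.add_sub_add_right,
      List.range_zero, List.map_nil, List.prod_nil, one_mulVec, Nat.sub_zero]

end

/-- If the unspoofed and spoofed filters use equal gains and equal initial
means, then `m_t − m̃_t = ∑_{i=0}^{t−2} (∏_{j=0}^{i} A_{t−j}) C_{t−1−i} + C_t`;
the difference depends only on the gains and the spoofing signals. -/
theorem spoofed_kf_difference_equal_gains
    (F G H : Matrix (Fin 2) (Fin 2) ℝ)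
    (K K' : ℕ → Matrix (Fin 2) (Fin 2) ℝ)
    (u z ε : ℕ → Fin 2 → ℝ)
    (m m' : ℕ → Fin 2 → ℝ)
    (A : ℕ → Matrix (Fin 2) (Fin 2) ℝ)
    (C : ℕ → Fin 2 → ℝ)
    (hm : ∀ t : ℕ, 1 ≤ t →
      m t = (1 - K t * H) *ᵥ (F *ᵥ m (t - 1) + G *ᵥ u (t - 1)) + K t *ᵥ z t)
    (hm' : ∀ t : ℕ, 1 ≤ t →
      m' t = (1 - K' t * H) *ᵥ (F *ᵥ m' (t - 1) + G *ᵥ u (t - 1))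
              + K' t *ᵥ (z t + ε t))
    (hA : ∀ t : ℕ, A t = F - K' t * H * F)
    (hC : ∀ t : ℕ, C t = -(K' t *ᵥ ε t))
    (hKeq : ∀ t : ℕ, 1 ≤ t → K t = K' t)
    (hm0 : m 0 = m' 0) :
    ∀ t : ℕ, 1 ≤ t →
      m t - m' t =
        ∑ i ∈ Finset.range (t - 1),
            ((List.range (i + 1)).map (fun j => A (t - j))).prod *ᵥ C (t - 1 - i)
        + C t := by
  have hstep : ∀ t, m (t + 1) - m' (t + 1) = A (t + 1) *ᵥ (m t - m' t) + C (t + 1) := by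
    intro t
    have ht : 1 ≤ t + 1 := Nat.le_add_left 1 t
    rw [hm _ ht, hm' _ ht, hKeq _ ht, Nat.add_sub_cancel,
      kalman_update_sub, hA, hC, sub_add_cancel_left, mulVec_neg]
  intro t ht
  obtain ⟨t, rfl⟩ := Nat.exists_eq_add_of_le' ht
  simpa using eq_sum_of_affine_recursion A C (fun t => m t - m' t) (sub_eq_zero.2 hm0) hstep t
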